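/- Let p be a prime and (a,b) ∈ ℤ². Among the p² + p matrices A in L(p²) = { [[1,0],[x,1]] : 0 ≤ x < p² } ∪ { [[0,-1],[1,py]] : 0 ≤ y < p }, the number of A such that the first coordinate of ᵗA⁻¹·(a,b) is divisible by p² equals p²+p if p² | a and p² | b, equals 1 if p ∤ a or p ∤ b, and equals p otherwise. -/

import Mathlib

/-!
For `A = [[1,0],[x,1]]` the first coordinate of `ᵗA⁻¹(a,b)` is `a - x b`, and for
`A = [[0,-1],[1,t]]` it is `t a - b`. So we count the solutions `x < p²` of `x b ≡ a (mod p²)`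
and `y < p` of `p y a ≡ b (mod p²)`. If `p ∤ b`, `b` is invertible mod `p²`, so the first
congruence has one solution and the second none. If `p ∣ b` but `p ∤ a`, the roles swap after
cancelling one factor `p` in the second. If `p` divides both, we cancel `p` in both congruences
and count modulo `p`; a residue class mod `p` occurs `p` times among the `x < p²`.
-/

open Matrix Finset

/-- `L(p²) = { [[1,0],[x,1]] : 0 ≤ x < p² } ∪ { [[0,-1],[1,py]] : 0 ≤ y < p }`,
indexed by `Fin (p² + p)`. -/
def Lp2 (p : ℕ) : Fin (p ^ 2 + p) → Matrix (Fin 2) (Fin 2) ℤ :=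
  fun i => if (i : ℕ) < p ^ 2 then !![1, 0; (i : ℤ), 1]
    else !![0, -1; 1, (p : ℤ) * ((i : ℤ) - (p : ℤ) ^ 2)]

section MatrixComputations

variable {R : Type*} [CommRing R]

theorem inv_transpose_mulVec_lowerUnitriangular (x a b : R) :
    !![1, 0; x, 1]⁻¹ᵀ *ᵥ ![a, b] = ![a - x * b, b] := by
  rw [inv_eq_left_inv (B := !![1, 0; -x, 1]) (by simp [one_fin_two])]
  ext i; fin_cases i <;> simp [mulVec, dotProduct]; ring

theorem inv_transpose_mulVec_rotation (t a b : R) :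
    !![0, -1; 1, t]⁻¹ᵀ *ᵥ ![a, b] = ![t * a - b, a] := by
  rw [inv_eq_left_inv (B := !![t, 1; -1, 0]) (by simp [one_fin_two])]
  ext i; fin_cases i <;> simp [mulVec, dotProduct]; ring

end MatrixComputations

theorem Lp2_castAdd (p : ℕ) (x : Fin (p ^ 2)) :
    Lp2 p (Fin.castAdd p x) = !![1, 0; (x : ℤ), 1] := by
  simp [Lp2]

theorem Lp2_natAdd (p : ℕ) (y : Fin p) :
    Lp2 p (Fin.natAdd (p ^ 2) y) = !![0, -1; 1, (p : ℤ) * y] := by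
  simp [Lp2]

theorem card_filter_range_dvd_mul_sub_of_isCoprime {m : ℕ} [NeZero m] (k : ℕ) {c d : ℤ}
    (hd : IsCoprime (m : ℤ) d) : #{x ∈ range (m * k) | (m : ℤ) ∣ ↑x * d - c} = k := by
  obtain ⟨u, hu⟩ := (ZMod.coe_int_isUnit_iff_isCoprime d m).2 hd
  have hmod : ∀ x : ℕ, (m : ℤ) ∣ x * d - c ↔ x ≡ ((c : ZMod m) * ↑u⁻¹).val [MOD m] := by
    intro x
    rw [← ZMod.intCast_zmod_eq_zero_iff_dvd, ← ZMod.natCast_eq_natCast_iff, ZMod.natCast_val,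
      ZMod.cast_id', id, Units.eq_mul_inv_iff_mul_eq, hu]
    push_cast
    rw [sub_eq_zero]
  rw [filter_congr fun x _ => hmod x, ← Nat.count_eq_card_filter_range,
    Nat.count_modEq_card _ (NeZero.pos m), Nat.mul_mod_right,
    Nat.mul_div_cancel_left _ (NeZero.pos m)]
  simp

theorem card_filter_dvd_mul_sub_of_dvd {m c d : ℤ} (s : Finset ℕ) (hd : m ∣ d) (hc : m ∣ c) :
    #{x ∈ s | m ∣ ↑x * d - c} = #s := by
  rw [filter_true_of_mem fun x _ => dvd_sub (hd.mul_left _) hc]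

theorem card_filter_dvd_mul_sub_eq_zero {q m c d : ℤ} (s : Finset ℕ) (hqm : q ∣ m) (hd : q ∣ d)
    (hc : ¬ q ∣ c) : #{x ∈ s | m ∣ ↑x * d - c} = 0 := by
  rw [card_eq_zero, filter_eq_empty_iff]
  intro x _ hx
  exact hc <| (dvd_sub_right (hd.mul_left _)).1 (hqm.trans hx)

theorem card_filter_sq_dvd_mul_sub_mul {q c d : ℤ} (s : Finset ℕ) (hq : q ≠ 0) :
    #{x ∈ s | q ^ 2 ∣ ↑x * (q * d) - q * c} = #{x ∈ s | q ∣ ↑x * d - c} := by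
  congr 1
  refine filter_congr fun x _ => ?_
  rw [show (x : ℤ) * (q * d) - q * c = q * (x * d - c) by ring, sq, mul_dvd_mul_iff_left hq]

def congruenceCount (p : ℕ) (a b : ℤ) : ℕ :=
  #{x ∈ range (p ^ 2) | (p : ℤ) ^ 2 ∣ ↑x * b - a}
    + #{y ∈ range p | (p : ℤ) ^ 2 ∣ ↑y * (p * a) - b}

theorem card_filter_Lp2 (p : ℕ) (a b : ℤ) :
    #{i | (p : ℤ) ^ 2 ∣ ((Lp2 p i)⁻¹ᵀ *ᵥ ![a, b]) 0} = congruenceCount p a b := by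
  simp only [congruenceCount, card_filter, Fin.sum_univ_add, Lp2_castAdd, Lp2_natAdd,
    inv_transpose_mulVec_lowerUnitriangular, inv_transpose_mulVec_rotation, cons_val_zero]
  rw [← Fin.sum_univ_eq_sum_range, ← Fin.sum_univ_eq_sum_range]
  congr 1 <;> refine sum_congr rfl fun i _ => ?_
  · simp only [dvd_sub_comm]
  · ring_nf

section CongruenceCount

variable {p : ℕ} {a b : ℤ}

theorem congruenceCount_of_sq_dvd (ha : (p : ℤ) ^ 2 ∣ a) (hb : (p : ℤ) ^ 2 ∣ b) :
    congruenceCount p a b = p ^ 2 + p := by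
  have hpa : (p : ℤ) ^ 2 ∣ p * a :=
    sq (p : ℤ) ▸ mul_dvd_mul_left _ ((dvd_pow_self _ two_ne_zero).trans ha)
  rw [congruenceCount, card_filter_dvd_mul_sub_of_dvd _ hb ha,
    card_filter_dvd_mul_sub_of_dvd _ hpa hb, card_range, card_range]

theorem congruenceCount_of_not_dvd_right (hp : Prime (p : ℤ)) (hb : ¬ (p : ℤ) ∣ b) :
    congruenceCount p a b = 1 := by
  have : NeZero (p ^ 2) := ⟨pow_ne_zero 2 (by exact_mod_cast hp.ne_zero)⟩
  rw [congruenceCount,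
    card_filter_dvd_mul_sub_eq_zero _ (dvd_pow_self _ two_ne_zero) (dvd_mul_right _ _) hb, add_zero]
  have hb2 : IsCoprime ((p ^ 2 : ℕ) : ℤ) b := by
    simpa using (hp.coprime_iff_not_dvd.2 hb).pow_left
  simpa using card_filter_range_dvd_mul_sub_of_isCoprime 1 (c := a) hb2

theorem congruenceCount_of_dvd_right_of_not_dvd_left (hp : Prime (p : ℤ))
    (hb : (p : ℤ) ∣ b) (ha : ¬ (p : ℤ) ∣ a) : congruenceCount p a b = 1 := by
  have : NeZero p := ⟨by exact_mod_cast hp.ne_zero⟩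
  obtain ⟨b, rfl⟩ := hb
  rw [congruenceCount, card_filter_sq_dvd_mul_sub_mul _ hp.ne_zero,
    card_filter_dvd_mul_sub_eq_zero _ (dvd_pow_self _ two_ne_zero) (dvd_mul_right _ _) ha, zero_add]
  simpa using card_filter_range_dvd_mul_sub_of_isCoprime 1 (c := b) (hp.coprime_iff_not_dvd.2 ha)

theorem congruenceCount_of_dvd_of_not_sq_dvd (hp : Prime (p : ℤ)) (ha : (p : ℤ) ∣ a)
    (hb : (p : ℤ) ∣ b) (hsq : ¬ ((p : ℤ) ^ 2 ∣ a ∧ (p : ℤ) ^ 2 ∣ b)) :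
    congruenceCount p a b = p := by
  have : NeZero p := ⟨by exact_mod_cast hp.ne_zero⟩
  obtain ⟨a, rfl⟩ := ha
  obtain ⟨b, rfl⟩ := hb
  rw [congruenceCount, card_filter_sq_dvd_mul_sub_mul _ hp.ne_zero,
    card_filter_sq_dvd_mul_sub_mul _ hp.ne_zero]
  by_cases hb : (p : ℤ) ∣ b
  · have ha : ¬ (p : ℤ) ∣ a := fun ha => hsq ⟨sq (p : ℤ) ▸ mul_dvd_mul_left _ ha,
      sq (p : ℤ) ▸ mul_dvd_mul_left _ hb⟩
    rw [card_filter_dvd_mul_sub_eq_zero _ dvd_rfl hb ha,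
      card_filter_dvd_mul_sub_of_dvd _ (dvd_mul_right _ _) hb, card_range, zero_add]
  · rw [sq, card_filter_range_dvd_mul_sub_of_isCoprime p (hp.coprime_iff_not_dvd.2 hb),
      card_filter_dvd_mul_sub_eq_zero _ dvd_rfl (dvd_mul_right _ _) hb, add_zero]

end CongruenceCount

/-- Among the `p²+p` matrices `A ∈ L(p²)`, the number of `A` such that
the first coordinate of `ᵗA⁻¹·(a,b)` is divisible by `p²` equals `p²+p` if `p² ∣ a` and
`p² ∣ b`, equals `1` if `p ∤ a` or `p ∤ b`, and equals `p` otherwise. -/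
theorem statement_5 (p : ℕ) (hp : p.Prime) (a b : ℤ) :
    (Finset.univ.filter fun i : Fin (p ^ 2 + p) =>
        (p : ℤ) ^ 2 ∣ (((Lp2 p i)⁻¹)ᵀ.mulVec ![a, b]) 0).card
      = if (p : ℤ) ^ 2 ∣ a ∧ (p : ℤ) ^ 2 ∣ b then p ^ 2 + p
        else if ¬ (p : ℤ) ∣ a ∨ ¬ (p : ℤ) ∣ b then 1
        else p := by
  have hp : Prime (p : ℤ) := Nat.prime_iff_prime_int.mp hp
  rw [card_filter_Lp2]
  split_ifs with hsq hndvd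
  · exact congruenceCount_of_sq_dvd hsq.1 hsq.2
  · by_cases hb : (p : ℤ) ∣ b
    · exact congruenceCount_of_dvd_right_of_not_dvd_left hp hb (hndvd.resolve_right (not_not.2 hb))
    · exact congruenceCount_of_not_dvd_right hp hb
  · rw [not_or, not_not, not_not] at hndvd
    exact congruenceCount_of_dvd_of_not_sq_dvd hp hndvd.1 hndvd.2 hsq
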